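/- arXiv:1101.4375 — 2 statements merged into one kernel-verified Lean document; each statement's English description precedes it below -/
import Mathlib

section
/- The metrics h_φ₁ = (r² + φ₁)⁻²dr² + (r² + φ₁)⁻¹γ and h_φ₂ = (r² + φ₂)⁻²dr² + (r² + φ₂)⁻¹γ on I × S (where γ is an r-independent Riemannian metric on a surface S) are projectively equivalent: their Levi-Civita connections differ by Γ̃ⁱⱼₖ = Γⁱⱼₖ + δⁱⱼωₖ + δⁱₖωⱼ with ω = r(φ₂ − φ₁)/((r² + φ₁)(r² + φ₂)) dr. -/
/-- Partial derivative of a function on `ℝⁿ` in the `i`-th coordinate direction. -/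
noncomputable def pderiv {n : ℕ} (f : (Fin n → ℝ) → ℝ) (i : Fin n)
    (x : Fin n → ℝ) : ℝ :=
  deriv (fun s => f (Function.update x i s)) (x i)

/-- Christoffel symbols `Γⁱⱼₖ = ½ gⁱˡ(∂ⱼ g_{lk} + ∂ₖ g_{lj} − ∂_l g_{jk})` of a
metric given as a matrix-valued function of the coordinates. -/
noncomputable def christoffel {n : ℕ}
    (g : (Fin n → ℝ) → Matrix (Fin n) (Fin n) ℝ) (x : Fin n → ℝ)
    (i j k : Fin n) : ℝ :=
  (1 / 2) * ∑ l, (g x)⁻¹ i l *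
    (pderiv (fun y => g y l k) j x + pderiv (fun y => g y l j) k x
      - pderiv (fun y => g y j k) l x)

/-- The optical metric `h_φ = (r² + φ)⁻²dr² + (r² + φ)⁻¹e^{−w}γ₁` in coordinates
`(r, x, y)`, with `γ₁ = e^{u}(dx² + dy²)`. -/
noncomputable def hphi (φ : ℝ) (w u : ℝ → ℝ → ℝ) (x : Fin 3 → ℝ) :
    Matrix (Fin 3) (Fin 3) ℝ :=
  Matrix.diagonal ![(((x 0) ^ 2 + φ) ^ 2)⁻¹,
    ((x 0) ^ 2 + φ)⁻¹ * Real.exp (u (x 1) (x 2) - w (x 1) (x 2)),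
    ((x 0) ^ 2 + φ)⁻¹ * Real.exp (u (x 1) (x 2) - w (x 1) (x 2))]

section Aux
variable (φ : ℝ) (w u : ℝ → ℝ → ℝ) (x : Fin 3 → ℝ)

lemma hphi_inv (h : 0 < (x 0)^2 + φ) :
    (hphi φ w u x)⁻¹ = Matrix.diagonal ![((x 0) ^ 2 + φ) ^ 2,
      ((x 0) ^ 2 + φ) * (Real.exp (u (x 1) (x 2) - w (x 1) (x 2)))⁻¹,
      ((x 0) ^ 2 + φ) * (Real.exp (u (x 1) (x 2) - w (x 1) (x 2)))⁻¹] := by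
  have hf : (x 0)^2 + φ ≠ 0 := h.ne'
  have hA : Real.exp (u (x 1) (x 2) - w (x 1) (x 2)) ≠ 0 := (Real.exp_pos _).ne'
  set v : Fin 3 → ℝ := ![(((x 0) ^ 2 + φ) ^ 2)⁻¹,
    ((x 0) ^ 2 + φ)⁻¹ * Real.exp (u (x 1) (x 2) - w (x 1) (x 2)),
    ((x 0) ^ 2 + φ)⁻¹ * Real.exp (u (x 1) (x 2) - w (x 1) (x 2))] with hv
  have hvne : ∀ i, v i ≠ 0 := by
    intro i; fin_cases i <;> simp [hv, hf, hA]
  have hm : v * v⁻¹ = 1 := by funext i; simp [hvne i]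
  have hm' : v⁻¹ * v = 1 := by funext i; simp [hvne i]
  have hvi : v⁻¹ = ![((x 0) ^ 2 + φ) ^ 2,
      ((x 0) ^ 2 + φ) * (Real.exp (u (x 1) (x 2) - w (x 1) (x 2)))⁻¹,
      ((x 0) ^ 2 + φ) * (Real.exp (u (x 1) (x 2) - w (x 1) (x 2)))⁻¹] := by
    funext i; fin_cases i <;>
      simp [hv, mul_inv, inv_inv] <;> ring
  rw [hphi, Matrix.inv_diagonal,
    show Ring.inverse v = v⁻¹ from Ring.inverse_unit ⟨v, v⁻¹, hm, hm'⟩, hvi]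

lemma pd00_0 (h : 0 < (x 0)^2 + φ) :
    pderiv (fun y => hphi φ w u y 0 0) 0 x
      = -(2 * (x 0 ^2 + φ) ^ 1 * (2 * x 0 ^ 1)) / ((x 0 ^2 + φ)^2)^2 := by
  unfold pderiv
  have : (fun s : ℝ => hphi φ w u (Function.update x 0 s) 0 0)
      = fun s => ((s ^ 2 + φ) ^ 2)⁻¹ := by
    funext s; simp [hphi, Matrix.diagonal_apply]
  rw [this]
  exact ((((hasDerivAt_pow 2 (x 0)).add_const φ).pow 2).inv (pow_ne_zero 2 h.ne')).deriv

lemma pd00_1 : pderiv (fun y => hphi φ w u y 0 0) 1 x = 0 := by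
  unfold pderiv
  have : (fun s : ℝ => hphi φ w u (Function.update x 1 s) 0 0)
      = fun _ => (((x 0) ^ 2 + φ) ^ 2)⁻¹ := by
    funext s; simp [hphi, Matrix.diagonal_apply, Function.update_of_ne]
  rw [this, deriv_const]

lemma pd00_2 : pderiv (fun y => hphi φ w u y 0 0) 2 x = 0 := by
  unfold pderiv
  have : (fun s : ℝ => hphi φ w u (Function.update x 2 s) 0 0)
      = fun _ => (((x 0) ^ 2 + φ) ^ 2)⁻¹ := by
    funext s; simp [hphi, Matrix.diagonal_apply, Function.update_of_ne]
  rw [this, deriv_const]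
end Aux
section Aux2
variable (φ : ℝ) (w u : ℝ → ℝ → ℝ) (x : Fin 3 → ℝ)

lemma pd11_0 (h : 0 < (x 0)^2 + φ) :
    pderiv (fun y => hphi φ w u y 1 1) 0 x
      = -(2 * x 0 ^ 1) / ((x 0)^2 + φ)^2 * Real.exp (u (x 1) (x 2) - w (x 1) (x 2)) := by
  unfold pderiv
  have : (fun s : ℝ => hphi φ w u (Function.update x 0 s) 1 1)
      = fun s => (s ^ 2 + φ)⁻¹ * Real.exp (u (x 1) (x 2) - w (x 1) (x 2)) := by
    funext s; simp [hphi, Matrix.diagonal_apply, Function.update_of_ne]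
  rw [this]
  exact ((((hasDerivAt_pow 2 (x 0)).add_const φ).inv h.ne').mul_const _).deriv

lemma pd11_1 :
    pderiv (fun y => hphi φ w u y 1 1) 1 x
      = ((x 0) ^ 2 + φ)⁻¹ * deriv (fun s => Real.exp (u s (x 2) - w s (x 2))) (x 1) := by
  unfold pderiv
  have : (fun s : ℝ => hphi φ w u (Function.update x 1 s) 1 1)
      = fun s => ((x 0) ^ 2 + φ)⁻¹ * Real.exp (u s (x 2) - w s (x 2)) := by
    funext s; simp [hphi, Matrix.diagonal_apply, Function.update_of_ne]
  rw [this, deriv_const_mul_field]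

lemma pd11_2 :
    pderiv (fun y => hphi φ w u y 1 1) 2 x
      = ((x 0) ^ 2 + φ)⁻¹ * deriv (fun s => Real.exp (u (x 1) s - w (x 1) s)) (x 2) := by
  unfold pderiv
  have : (fun s : ℝ => hphi φ w u (Function.update x 2 s) 1 1)
      = fun s => ((x 0) ^ 2 + φ)⁻¹ * Real.exp (u (x 1) s - w (x 1) s) := by
    funext s; simp [hphi, Matrix.diagonal_apply, Function.update_of_ne]
  rw [this, deriv_const_mul_field]

lemma pd22_0 (h : 0 < (x 0)^2 + φ) :
    pderiv (fun y => hphi φ w u y 2 2) 0 x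
      = -(2 * x 0 ^ 1) / ((x 0)^2 + φ)^2 * Real.exp (u (x 1) (x 2) - w (x 1) (x 2)) := by
  unfold pderiv
  have : (fun s : ℝ => hphi φ w u (Function.update x 0 s) 2 2)
      = fun s => (s ^ 2 + φ)⁻¹ * Real.exp (u (x 1) (x 2) - w (x 1) (x 2)) := by
    funext s; simp [hphi, Matrix.diagonal_apply, Function.update_of_ne]
  rw [this]
  exact ((((hasDerivAt_pow 2 (x 0)).add_const φ).inv h.ne').mul_const _).deriv

lemma pd22_1 :
    pderiv (fun y => hphi φ w u y 2 2) 1 x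
      = ((x 0) ^ 2 + φ)⁻¹ * deriv (fun s => Real.exp (u s (x 2) - w s (x 2))) (x 1) := by
  unfold pderiv
  have : (fun s : ℝ => hphi φ w u (Function.update x 1 s) 2 2)
      = fun s => ((x 0) ^ 2 + φ)⁻¹ * Real.exp (u s (x 2) - w s (x 2)) := by
    funext s; simp [hphi, Matrix.diagonal_apply, Function.update_of_ne]
  rw [this, deriv_const_mul_field]

lemma pd22_2 :
    pderiv (fun y => hphi φ w u y 2 2) 2 x
      = ((x 0) ^ 2 + φ)⁻¹ * deriv (fun s => Real.exp (u (x 1) s - w (x 1) s)) (x 2) := by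
  unfold pderiv
  have : (fun s : ℝ => hphi φ w u (Function.update x 2 s) 2 2)
      = fun s => ((x 0) ^ 2 + φ)⁻¹ * Real.exp (u (x 1) s - w (x 1) s) := by
    funext s; simp [hphi, Matrix.diagonal_apply, Function.update_of_ne]
  rw [this, deriv_const_mul_field]

lemma pdoff (l k : Fin 3) (hlk : l ≠ k) (j : Fin 3) :
    pderiv (fun y => hphi φ w u y l k) j x = 0 := by
  unfold pderiv
  have : (fun s : ℝ => hphi φ w u (Function.update x j s) l k) = fun _ => (0:ℝ) := by
    funext s; simp [hphi, Matrix.diagonal_apply_ne _ hlk]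
  rw [this, deriv_const]

lemma pd01 (j : Fin 3) : pderiv (fun y => hphi φ w u y 0 1) j x = 0 := pdoff φ w u x 0 1 (by decide) j
lemma pd02 (j : Fin 3) : pderiv (fun y => hphi φ w u y 0 2) j x = 0 := pdoff φ w u x 0 2 (by decide) j
lemma pd10 (j : Fin 3) : pderiv (fun y => hphi φ w u y 1 0) j x = 0 := pdoff φ w u x 1 0 (by decide) j
lemma pd12 (j : Fin 3) : pderiv (fun y => hphi φ w u y 1 2) j x = 0 := pdoff φ w u x 1 2 (by decide) j
lemma pd20 (j : Fin 3) : pderiv (fun y => hphi φ w u y 2 0) j x = 0 := pdoff φ w u x 2 0 (by decide) j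
lemma pd21 (j : Fin 3) : pderiv (fun y => hphi φ w u y 2 1) j x = 0 := pdoff φ w u x 2 1 (by decide) j
end Aux2

noncomputable def Cterm (w u : ℝ → ℝ → ℝ) (x : Fin 3 → ℝ) (i j k : Fin 3) : ℝ :=
  let A := Real.exp (u (x 1) (x 2) - w (x 1) (x 2))
  let D := deriv (fun s => Real.exp (u s (x 2) - w s (x 2))) (x 1)
  let E := deriv (fun s => Real.exp (u (x 1) s - w (x 1) s)) (x 2)
  if i = 1 then
    (if j = 1 ∧ k = 1 then D / (2 * A) else if j = 2 ∧ k = 2 then -D / (2 * A)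
     else if (j = 1 ∧ k = 2) ∨ (j = 2 ∧ k = 1) then E / (2 * A) else 0)
  else if i = 2 then
    (if j = 2 ∧ k = 2 then E / (2 * A) else if j = 1 ∧ k = 1 then -E / (2 * A)
     else if (j = 1 ∧ k = 2) ∨ (j = 2 ∧ k = 1) then D / (2 * A) else 0)
  else
    (if (j = 1 ∧ k = 1) ∨ (j = 2 ∧ k = 2) then x 0 * A else 0)


section Chr
variable (φ : ℝ) (w u : ℝ → ℝ → ℝ) (x : Fin 3 → ℝ)

set_option maxHeartbeats 1000000 in
lemma chr0 (h : 0 < (x 0) ^ 2 + φ) (j k : Fin 3) :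
    christoffel (hphi φ w u) x 0 j k =
      if j = 0 ∧ k = 0 then -(2 * x 0) / ((x 0) ^ 2 + φ)
      else if (j = 1 ∧ k = 1) ∨ (j = 2 ∧ k = 2) then
        x 0 * Real.exp (u (x 1) (x 2) - w (x 1) (x 2)) else 0 := by
  have hf : (x 0) ^ 2 + φ ≠ 0 := h.ne'
  have h3 : ∀ m : Fin 3, m = 0 ∨ m = 1 ∨ m = 2 := by decide
  rcases h3 j with rfl | rfl | rfl <;> rcases h3 k with rfl | rfl | rfl <;>
    simp only [christoffel, Fin.sum_univ_three,
      hphi_inv φ w u x h, Matrix.diagonal_apply, Matrix.cons_val_zero, Matrix.cons_val_one,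
      Matrix.head_cons, Matrix.cons_val_two, Matrix.tail_cons,
      pd00_0 φ w u x h, pd00_1, pd00_2, pd11_0 φ w u x h, pd11_1, pd11_2,
      pd22_0 φ w u x h, pd22_1, pd22_2, pd01, pd02, pd10, pd12, pd20, pd21,
      Fin.reduceEq, reduceIte, if_true, if_false, and_self, and_true, true_and,
      false_and, and_false, or_self, or_true, true_or, false_or,
      zero_mul, mul_zero, add_zero, zero_add, sub_zero, one_mul, neg_zero, zero_sub] <;>
    try field_simp <;> try ring

set_option maxHeartbeats 1000000 in
lemma chr1 (h : 0 < (x 0) ^ 2 + φ) (j k : Fin 3) :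
    christoffel (hphi φ w u) x 1 j k =
      if (j = 0 ∧ k = 1) ∨ (j = 1 ∧ k = 0) then -(x 0) / ((x 0) ^ 2 + φ)
      else if j = 1 ∧ k = 1 then
        deriv (fun s => Real.exp (u s (x 2) - w s (x 2))) (x 1)
          / (2 * Real.exp (u (x 1) (x 2) - w (x 1) (x 2)))
      else if j = 2 ∧ k = 2 then
        -deriv (fun s => Real.exp (u s (x 2) - w s (x 2))) (x 1)
          / (2 * Real.exp (u (x 1) (x 2) - w (x 1) (x 2)))
      else if (j = 1 ∧ k = 2) ∨ (j = 2 ∧ k = 1) then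
        deriv (fun s => Real.exp (u (x 1) s - w (x 1) s)) (x 2)
          / (2 * Real.exp (u (x 1) (x 2) - w (x 1) (x 2)))
      else 0 := by
  have hA : Real.exp (u (x 1) (x 2) - w (x 1) (x 2)) ≠ 0 := (Real.exp_pos _).ne'
  have hf : (x 0) ^ 2 + φ ≠ 0 := h.ne'
  have h3 : ∀ m : Fin 3, m = 0 ∨ m = 1 ∨ m = 2 := by decide
  rcases h3 j with rfl | rfl | rfl <;> rcases h3 k with rfl | rfl | rfl <;>
    simp only [christoffel, Fin.sum_univ_three,
      hphi_inv φ w u x h, Matrix.diagonal_apply, Matrix.cons_val_zero, Matrix.cons_val_one,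
      Matrix.head_cons, Matrix.cons_val_two, Matrix.tail_cons,
      pd00_0 φ w u x h, pd00_1, pd00_2, pd11_0 φ w u x h, pd11_1, pd11_2,
      pd22_0 φ w u x h, pd22_1, pd22_2, pd01, pd02, pd10, pd12, pd20, pd21,
      Fin.reduceEq, reduceIte, if_true, if_false, and_self, and_true, true_and,
      false_and, and_false, or_self, or_true, true_or, false_or,
      zero_mul, mul_zero, add_zero, zero_add, sub_zero, one_mul, neg_zero, zero_sub] <;>
    try field_simp <;> try ring

set_option maxHeartbeats 1000000 in
lemma chr2 (h : 0 < (x 0) ^ 2 + φ) (j k : Fin 3) :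
    christoffel (hphi φ w u) x 2 j k =
      if (j = 0 ∧ k = 2) ∨ (j = 2 ∧ k = 0) then -(x 0) / ((x 0) ^ 2 + φ)
      else if j = 2 ∧ k = 2 then
        deriv (fun s => Real.exp (u (x 1) s - w (x 1) s)) (x 2)
          / (2 * Real.exp (u (x 1) (x 2) - w (x 1) (x 2)))
      else if j = 1 ∧ k = 1 then
        -deriv (fun s => Real.exp (u (x 1) s - w (x 1) s)) (x 2)
          / (2 * Real.exp (u (x 1) (x 2) - w (x 1) (x 2)))
      else if (j = 1 ∧ k = 2) ∨ (j = 2 ∧ k = 1) then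
        deriv (fun s => Real.exp (u s (x 2) - w s (x 2))) (x 1)
          / (2 * Real.exp (u (x 1) (x 2) - w (x 1) (x 2)))
      else 0 := by
  have hA : Real.exp (u (x 1) (x 2) - w (x 1) (x 2)) ≠ 0 := (Real.exp_pos _).ne'
  have hf : (x 0) ^ 2 + φ ≠ 0 := h.ne'
  have h3 : ∀ m : Fin 3, m = 0 ∨ m = 1 ∨ m = 2 := by decide
  rcases h3 j with rfl | rfl | rfl <;> rcases h3 k with rfl | rfl | rfl <;>
    simp only [christoffel, Fin.sum_univ_three,
      hphi_inv φ w u x h, Matrix.diagonal_apply, Matrix.cons_val_zero, Matrix.cons_val_one,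
      Matrix.head_cons, Matrix.cons_val_two, Matrix.tail_cons,
      pd00_0 φ w u x h, pd00_1, pd00_2, pd11_0 φ w u x h, pd11_1, pd11_2,
      pd22_0 φ w u x h, pd22_1, pd22_2, pd01, pd02, pd10, pd12, pd20, pd21,
      Fin.reduceEq, reduceIte, if_true, if_false, and_self, and_true, true_and,
      false_and, and_false, or_self, or_true, true_or, false_or,
      zero_mul, mul_zero, add_zero, zero_add, sub_zero, one_mul, neg_zero, zero_sub] <;>
    try field_simp <;> try ring

end Chr

/-- The metrics `h_{φ₁}` and `h_{φ₂}` are projectively equivalent: their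
Levi-Civita connections differ by `δⁱⱼωₖ + δⁱₖωⱼ` with
`ω = r(φ₂ − φ₁)/((r² + φ₁)(r² + φ₂)) dr`. -/
theorem stmt11 (φ₁ φ₂ : ℝ) (w u : ℝ → ℝ → ℝ)
    (hw : ContDiff ℝ (⊤ : ℕ∞) (fun p : ℝ × ℝ => w p.1 p.2))
    (hu : ContDiff ℝ (⊤ : ℕ∞) (fun p : ℝ × ℝ => u p.1 p.2))
    (x : Fin 3 → ℝ) (h1 : 0 < (x 0) ^ 2 + φ₁) (h2 : 0 < (x 0) ^ 2 + φ₂)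
    (i j k : Fin 3) :
    let ω : Fin 3 → ℝ := fun l => if l = 0 then
      x 0 * (φ₂ - φ₁) / (((x 0) ^ 2 + φ₁) * ((x 0) ^ 2 + φ₂)) else 0
    christoffel (hphi φ₂ w u) x i j k = christoffel (hphi φ₁ w u) x i j k
      + (if i = j then ω k else 0) + (if i = k then ω j else 0) := by
  intro ω
  have hω : ∀ l : Fin 3, ω l = if l = 0 then
      x 0 * (φ₂ - φ₁) / (((x 0) ^ 2 + φ₁) * ((x 0) ^ 2 + φ₂)) else 0 := fun l => rfl
  have hf1 : (x 0) ^ 2 + φ₁ ≠ 0 := h1.ne'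
  have hf2 : (x 0) ^ 2 + φ₂ ≠ 0 := h2.ne'
  have hA : Real.exp (u (x 1) (x 2) - w (x 1) (x 2)) ≠ 0 := (Real.exp_pos _).ne'
  have h3 : ∀ m : Fin 3, m = 0 ∨ m = 1 ∨ m = 2 := by decide
  rcases h3 i with rfl | rfl | rfl <;> rcases h3 j with rfl | rfl | rfl <;>
    rcases h3 k with rfl | rfl | rfl <;>
    simp only [chr0 φ₂ w u x h2, chr0 φ₁ w u x h1, chr1 φ₂ w u x h2, chr1 φ₁ w u x h1,
      chr2 φ₂ w u x h2, chr2 φ₁ w u x h1, hω,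
      Fin.reduceEq, reduceIte, if_true, if_false, and_self, and_true, true_and,
      false_and, and_false, or_self, or_true, true_or, false_or,
      zero_mul, mul_zero, add_zero, zero_add, sub_zero, one_mul, neg_zero, zero_sub] <;>
    try field_simp <;> try ring
end

section
/- For the Levi-Civita result: the metrics h = dr² + f(r)γ and h̃ = (κf(r)+1)⁻²dr² + f(r)(κf(r)+1)⁻¹γ, for a constant κ with κf + 1 > 0 and γ an r-independent metric, have connections differing by a projective change: Γ̃ⁱⱼₖ = Γⁱⱼₖ + δⁱⱼωₖ + δⁱₖωⱼ with ω = −(κ f'(r))/(2(κf(r)+1)) dr; hence h and h̃ share unparametrised geodesics. -/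
/-- Build a 3×3 block matrix `diag(A, B)` from a scalar `A` and a 2×2 block `B`. -/
def block3 (A : ℝ) (B : Matrix (Fin 2) (Fin 2) ℝ) : Matrix (Fin 3) (Fin 3) ℝ :=
  Matrix.of fun i j =>
    Fin.cases (Fin.cases A (fun _ => (0 : ℝ)) j)
      (fun i' => Fin.cases (0 : ℝ) (fun j' => B i' j') j) i

section
variable (A : ℝ) (B : Matrix (Fin 2) (Fin 2) ℝ)
lemma b00 : block3 A B 0 0 = A := rfl
lemma b01 : block3 A B 0 1 = 0 := rfl
lemma b02 : block3 A B 0 2 = 0 := rfl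
lemma b10 : block3 A B 1 0 = 0 := rfl
lemma b11 : block3 A B 1 1 = B 0 0 := rfl
lemma b12 : block3 A B 1 2 = B 0 1 := rfl
lemma b20 : block3 A B 2 0 = 0 := rfl
lemma b21 : block3 A B 2 1 = B 1 0 := rfl
lemma b22 : block3 A B 2 2 = B 1 1 := rfl
end

lemma mk30 (h : 0 < 3) : (⟨0, h⟩ : Fin 3) = 0 := rfl
lemma mk31 (h : 1 < 3) : (⟨1, h⟩ : Fin 3) = 1 := rfl
lemma mk32 (h : 2 < 3) : (⟨2, h⟩ : Fin 3) = 2 := rfl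

lemma block3_mul (A A' : ℝ) (B B' : Matrix (Fin 2) (Fin 2) ℝ) :
    block3 A B * block3 A' B' = block3 (A*A') (B*B') := by
  ext i j
  fin_cases i <;> fin_cases j <;>
    simp [Matrix.mul_apply, Fin.sum_univ_three, Fin.sum_univ_two,
      b00, b01, b02, b10, b11, b12, b20, b21, b22]

lemma block3_one : block3 1 1 = 1 := by
  ext i j
  fin_cases i <;> fin_cases j <;>
    simp [Matrix.one_apply, b00, b01, b02, b10, b11, b12, b20, b21, b22]

lemma block3_inv (A A' : ℝ) (B B' : Matrix (Fin 2) (Fin 2) ℝ)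
    (hA : A * A' = 1) (hB : B * B' = 1) : (block3 A B)⁻¹ = block3 A' B' := by
  apply Matrix.inv_eq_right_inv
  rw [block3_mul, hA, hB, block3_one]

set_option maxHeartbeats 4000000 in
/-- Levi-Civita's projective equivalence: the metrics `h = dr² + f(r)γ` and
`h̃ = (κf+1)⁻²dr² + f(κf+1)⁻¹γ` (with `γ` an `r`-independent Riemannian metric on a
surface, and `κf + 1 > 0`) have Levi-Civita connections differing by the projective
change `Γ̃ⁱⱼₖ = Γⁱⱼₖ + δⁱⱼωₖ + δⁱₖωⱼ` with `ω = −κf'/(2(κf+1)) dr`; hence `h` and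
`h̃` share unparametrised geodesics. -/
theorem stmt12 (f : ℝ → ℝ) (κ : ℝ) (hf : ContDiff ℝ (⊤ : ℕ∞) f)
    (γ : ℝ → ℝ → Matrix (Fin 2) (Fin 2) ℝ)
    (hγs : ∀ a b, (γ a b).IsSymm) (hγp : ∀ a b, (γ a b).PosDef)
    (hγ : ∀ a b, ContDiff ℝ (⊤ : ℕ∞) (fun p : ℝ × ℝ => γ p.1 p.2 a b))
    (x : Fin 3 → ℝ) (hfpos : 0 < f (x 0)) (hκ : 0 < κ * f (x 0) + 1)
    (i j k : Fin 3) :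
    let h : (Fin 3 → ℝ) → Matrix (Fin 3) (Fin 3) ℝ :=
      fun y => block3 1 (f (y 0) • γ (y 1) (y 2))
    let ht : (Fin 3 → ℝ) → Matrix (Fin 3) (Fin 3) ℝ :=
      fun y => block3 (((κ * f (y 0) + 1) ^ 2)⁻¹)
        ((f (y 0) / (κ * f (y 0) + 1)) • γ (y 1) (y 2))
    let ω : Fin 3 → ℝ := fun l => if l = 0 then
      -(κ * deriv f (x 0)) / (2 * (κ * f (x 0) + 1)) else 0
    christoffel ht x i j k = christoffel h x i j k
      + (if i = j then ω k else 0) + (if i = k then ω j else 0) := by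
  intro h ht ω
  have hFne : f (x 0) ≠ 0 := hfpos.ne'
  have hcne : κ * f (x 0) + 1 ≠ 0 := hκ.ne'
  have hf' : HasDerivAt f (deriv f (x 0)) (x 0) :=
    ((hf.differentiable (by simp)) (x 0)).hasDerivAt
  have hc : HasDerivAt (fun s => κ * f s + 1) (κ * deriv f (x 0)) (x 0) :=
    (hf'.const_mul κ).add_const 1
  have hGdet : IsUnit (γ (x 1) (x 2)).det :=
    isUnit_iff_ne_zero.mpr (hγp (x 1) (x 2)).det_pos.ne'
  have hGmul_inv : γ (x 1) (x 2) * (γ (x 1) (x 2))⁻¹ = 1 :=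
    Matrix.mul_nonsing_inv _ hGdet
  have hGinv_mul : (γ (x 1) (x 2))⁻¹ * γ (x 1) (x 2) = 1 :=
    Matrix.nonsing_inv_mul _ hGdet
  have hIG : ∀ a b : Fin 2,
      (γ (x 1) (x 2))⁻¹ a 0 * γ (x 1) (x 2) 0 b
        + (γ (x 1) (x 2))⁻¹ a 1 * γ (x 1) (x 2) 1 b = if a = b then 1 else 0 := by
    intro a b
    have h' : ((γ (x 1) (x 2))⁻¹ * γ (x 1) (x 2)) a b = (1 : Matrix (Fin 2) (Fin 2) ℝ) a b := by
      rw [hGinv_mul]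
    simpa [Matrix.mul_apply, Fin.sum_univ_two, Matrix.one_apply] using h'
  have hinvh : (block3 1 (f (x 0) • γ (x 1) (x 2)))⁻¹
      = block3 1 ((f (x 0))⁻¹ • (γ (x 1) (x 2))⁻¹) := by
    apply block3_inv _ _ _ _ (by norm_num)
    rw [Matrix.smul_mul, Matrix.mul_smul, hGmul_inv, smul_smul]
    rw [mul_inv_cancel₀ hFne, one_smul]
  have hinvt : (block3 (((κ * f (x 0) + 1) ^ 2)⁻¹)
        ((f (x 0) / (κ * f (x 0) + 1)) • γ (x 1) (x 2)))⁻¹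
      = block3 ((κ * f (x 0) + 1) ^ 2)
        (((κ * f (x 0) + 1) / f (x 0)) • (γ (x 1) (x 2))⁻¹) := by
    apply block3_inv
    · field_simp
    · rw [Matrix.smul_mul, Matrix.mul_smul, hGmul_inv, smul_smul]
      have : f (x 0) / (κ * f (x 0) + 1) * ((κ * f (x 0) + 1) / f (x 0)) = 1 := by
        rw [div_mul_div_comm, mul_comm (κ * f (x 0) + 1) (f (x 0)), div_self (mul_ne_zero hFne hcne)]
      rw [this, one_smul]
  have hd1 : ∀ a b : Fin 2, HasDerivAt (fun s => γ s (x 2) a b)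
      (deriv (fun s => γ s (x 2) a b) (x 1)) (x 1) := by
    intro a b
    have : Differentiable ℝ (fun s => γ s (x 2) a b) :=
      ((hγ a b).comp (contDiff_id.prodMk contDiff_const)).differentiable (by simp)
    exact (this (x 1)).hasDerivAt
  have hd2 : ∀ a b : Fin 2, HasDerivAt (fun s => γ (x 1) s a b)
      (deriv (fun s => γ (x 1) s a b) (x 2)) (x 2) := by
    intro a b
    have : Differentiable ℝ (fun s => γ (x 1) s a b) :=
      ((hγ a b).comp (contDiff_const.prodMk contDiff_id)).differentiable (by simp)
    exact (this (x 2)).hasDerivAt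
  have e10 : (1:Fin 3) ≠ 0 := by decide
  have e20 : (2:Fin 3) ≠ 0 := by decide
  have e01 : (0:Fin 3) ≠ 1 := by decide
  have e21 : (2:Fin 3) ≠ 1 := by decide
  have e02 : (0:Fin 3) ≠ 2 := by decide
  have e12 : (1:Fin 3) ≠ 2 := by decide
  have pdc : ∀ (r : ℝ) (j : Fin 3), pderiv (fun _ => r) j x = 0 := by
    intro r j; simp [pderiv]
  have hp0 : ∀ a b : Fin 2, pderiv (fun y => f (y 0) * γ (y 1) (y 2) a b) 0 x
      = deriv f (x 0) * γ (x 1) (x 2) a b := by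
    intro a b
    simp only [pderiv, Function.update_apply]
    norm_num [e10, e20, e01, e21, e02, e12, deriv_const_mul_field]
  have hp1 : ∀ a b : Fin 2, pderiv (fun y => f (y 0) * γ (y 1) (y 2) a b) 1 x
      = f (x 0) * deriv (fun s => γ s (x 2) a b) (x 1) := by
    intro a b
    simp only [pderiv, Function.update_apply]
    norm_num [e10, e20, e01, e21, e02, e12, deriv_const_mul_field]
  have hp2 : ∀ a b : Fin 2, pderiv (fun y => f (y 0) * γ (y 1) (y 2) a b) 2 x
      = f (x 0) * deriv (fun s => γ (x 1) s a b) (x 2) := by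
    intro a b
    simp only [pderiv, Function.update_apply]
    norm_num [e10, e20, e01, e21, e02, e12, deriv_const_mul_field]
  have hcsq : HasDerivAt (fun s => (κ * f s + 1) ^ 2)
      (2 * (κ * f (x 0) + 1) * (κ * deriv f (x 0))) (x 0) := by
    have := hc.pow 2
    norm_num at this
    exact this
  have hAinv : HasDerivAt (fun s => ((κ * f s + 1) ^ 2)⁻¹)
      (-(2 * (κ * f (x 0) + 1) * (κ * deriv f (x 0))) / ((κ * f (x 0) + 1) ^ 2) ^ 2)
      (x 0) := hcsq.inv (pow_ne_zero 2 hcne)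
  have hdiv : HasDerivAt (fun s => f s / (κ * f s + 1))
      ((deriv f (x 0) * (κ * f (x 0) + 1) - f (x 0) * (κ * deriv f (x 0)))
        / (κ * f (x 0) + 1) ^ 2) (x 0) := hf'.div hc hcne
  have hq00 : pderiv (fun y => ((κ * f (y 0) + 1) ^ 2)⁻¹) 0 x
      = -(2 * (κ * f (x 0) + 1) * (κ * deriv f (x 0))) / ((κ * f (x 0) + 1) ^ 2) ^ 2 := by
    simp only [pderiv, Function.update_apply, e10, e20, if_false, if_pos rfl,
      eq_self_iff_true, if_true]
    exact hAinv.deriv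
  have hq01 : pderiv (fun y => ((κ * f (y 0) + 1) ^ 2)⁻¹) 1 x = 0 := by
    simp only [pderiv, Function.update_apply]
    norm_num [e10, e20, e01, e21, e02, e12]
  have hq02 : pderiv (fun y => ((κ * f (y 0) + 1) ^ 2)⁻¹) 2 x = 0 := by
    simp only [pderiv, Function.update_apply]
    norm_num [e10, e20, e01, e21, e02, e12]
  have hr0 : ∀ a b : Fin 2,
      pderiv (fun y => f (y 0) / (κ * f (y 0) + 1) * γ (y 1) (y 2) a b) 0 x
      = ((deriv f (x 0) * (κ * f (x 0) + 1) - f (x 0) * (κ * deriv f (x 0)))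
          / (κ * f (x 0) + 1) ^ 2) * γ (x 1) (x 2) a b := by
    intro a b
    simp only [pderiv, Function.update_apply, e10, e20, if_false, if_pos rfl,
      eq_self_iff_true, if_true]
    exact (hdiv.mul_const _).deriv
  have hr1 : ∀ a b : Fin 2,
      pderiv (fun y => f (y 0) / (κ * f (y 0) + 1) * γ (y 1) (y 2) a b) 1 x
      = f (x 0) / (κ * f (x 0) + 1) * deriv (fun s => γ s (x 2) a b) (x 1) := by
    intro a b
    simp only [pderiv, Function.update_apply]
    norm_num [e10, e20, e01, e21, e02, e12, deriv_const_mul_field]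
  have hr2 : ∀ a b : Fin 2,
      pderiv (fun y => f (y 0) / (κ * f (y 0) + 1) * γ (y 1) (y 2) a b) 2 x
      = f (x 0) / (κ * f (x 0) + 1) * deriv (fun s => γ (x 1) s a b) (x 2) := by
    intro a b
    simp only [pderiv, Function.update_apply]
    norm_num [e10, e20, e01, e21, e02, e12, deriv_const_mul_field]
  have hIG00 : (γ (x 1) (x 2))⁻¹ 0 0 * γ (x 1) (x 2) 0 0
      + (γ (x 1) (x 2))⁻¹ 0 1 * γ (x 1) (x 2) 1 0 = 1 := by simpa using hIG 0 0
  have hIG01 : (γ (x 1) (x 2))⁻¹ 0 0 * γ (x 1) (x 2) 0 1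
      + (γ (x 1) (x 2))⁻¹ 0 1 * γ (x 1) (x 2) 1 1 = 0 := by simpa using hIG 0 1
  have hIG10 : (γ (x 1) (x 2))⁻¹ 1 0 * γ (x 1) (x 2) 0 0
      + (γ (x 1) (x 2))⁻¹ 1 1 * γ (x 1) (x 2) 1 0 = 0 := by simpa using hIG 1 0
  have hIG11 : (γ (x 1) (x 2))⁻¹ 1 0 * γ (x 1) (x 2) 0 1
      + (γ (x 1) (x 2))⁻¹ 1 1 * γ (x 1) (x 2) 1 1 = 1 := by simpa using hIG 1 1
  unfold h ht ω
  clear hf hγ hγs hγp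
  simp only [christoffel, Fin.sum_univ_three, hinvh, hinvt]
  fin_cases i <;> fin_cases j <;> fin_cases k <;>
    simp only [mk30, mk31, mk32, b00, b01, b02, b10, b11, b12, b20, b21, b22,
      Matrix.smul_apply, smul_eq_mul, pdc, hp0, hp1, hp2, hq00, hq01, hq02,
      hr0, hr1, hr2, e10, e20, e01, e21, e02, e12, if_false, if_pos rfl,
      eq_self_iff_true, if_true]
  · first
    | (field_simp; ring1)
    | (field_simp; done)
    | ring1
    | (simp; done)
    | (norm_num; done)
  · first
    | (field_simp; ring1)
    | (field_simp; done)
    | ring1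
    | (simp; done)
    | (norm_num; done)
  · first
    | (field_simp; ring1)
    | (field_simp; done)
    | ring1
    | (simp; done)
    | (norm_num; done)
  · first
    | (field_simp; ring1)
    | (field_simp; done)
    | ring1
    | (simp; done)
    | (norm_num; done)
  · first
    | (field_simp; ring1)
    | (field_simp; done)
    | ring1
    | (simp; done)
    | (norm_num; done)
  · first
    | (field_simp; ring1)
    | (field_simp; done)
    | ring1
    | (simp; done)
    | (norm_num; done)
  · first
    | (field_simp; ring1)
    | (field_simp; done)
    | ring1
    | (simp; done)
    | (norm_num; done)
  · first
    | (field_simp; ring1)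
    | (field_simp; done)
    | ring1
    | (simp; done)
    | (norm_num; done)
  · first
    | (field_simp; ring1)
    | (field_simp; done)
    | ring1
    | (simp; done)
    | (norm_num; done)
  · first
    | (field_simp; ring1)
    | (field_simp; done)
    | ring1
    | (simp; done)
    | (norm_num; done)
  · set p00 := (γ (x 1) (x 2))⁻¹ 0 0
    set p01 := (γ (x 1) (x 2))⁻¹ 0 1
    set p10 := (γ (x 1) (x 2))⁻¹ 1 0
    set p11 := (γ (x 1) (x 2))⁻¹ 1 1
    set q00 := γ (x 1) (x 2) 0 0
    set q01 := γ (x 1) (x 2) 0 1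
    set q10 := γ (x 1) (x 2) 1 0
    set q11 := γ (x 1) (x 2) 1 1
    linear_combination (norm := (field_simp; ring1))
      (deriv f (x 0) / (2 * f (x 0) * (κ * f (x 0) + 1))
        - deriv f (x 0) / (2 * f (x 0))) * hIG00
  · set p00 := (γ (x 1) (x 2))⁻¹ 0 0
    set p01 := (γ (x 1) (x 2))⁻¹ 0 1
    set p10 := (γ (x 1) (x 2))⁻¹ 1 0
    set p11 := (γ (x 1) (x 2))⁻¹ 1 1
    set q00 := γ (x 1) (x 2) 0 0
    set q01 := γ (x 1) (x 2) 0 1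
    set q10 := γ (x 1) (x 2) 1 0
    set q11 := γ (x 1) (x 2) 1 1
    linear_combination (norm := (field_simp; ring1))
      (deriv f (x 0) / (2 * f (x 0) * (κ * f (x 0) + 1))
        - deriv f (x 0) / (2 * f (x 0))) * hIG01
  · set p00 := (γ (x 1) (x 2))⁻¹ 0 0
    set p01 := (γ (x 1) (x 2))⁻¹ 0 1
    set p10 := (γ (x 1) (x 2))⁻¹ 1 0
    set p11 := (γ (x 1) (x 2))⁻¹ 1 1
    set q00 := γ (x 1) (x 2) 0 0
    set q01 := γ (x 1) (x 2) 0 1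
    set q10 := γ (x 1) (x 2) 1 0
    set q11 := γ (x 1) (x 2) 1 1
    linear_combination (norm := (field_simp; ring1))
      (deriv f (x 0) / (2 * f (x 0) * (κ * f (x 0) + 1))
        - deriv f (x 0) / (2 * f (x 0))) * hIG00
  · first
    | (field_simp; ring1)
    | (field_simp; done)
    | ring1
    | (simp; done)
    | (norm_num; done)
  · first
    | (field_simp; ring1)
    | (field_simp; done)
    | ring1
    | (simp; done)
    | (norm_num; done)
  · set p00 := (γ (x 1) (x 2))⁻¹ 0 0
    set p01 := (γ (x 1) (x 2))⁻¹ 0 1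
    set p10 := (γ (x 1) (x 2))⁻¹ 1 0
    set p11 := (γ (x 1) (x 2))⁻¹ 1 1
    set q00 := γ (x 1) (x 2) 0 0
    set q01 := γ (x 1) (x 2) 0 1
    set q10 := γ (x 1) (x 2) 1 0
    set q11 := γ (x 1) (x 2) 1 1
    linear_combination (norm := (field_simp; ring1))
      (deriv f (x 0) / (2 * f (x 0) * (κ * f (x 0) + 1))
        - deriv f (x 0) / (2 * f (x 0))) * hIG01
  · first
    | (field_simp; ring1)
    | (field_simp; done)
    | ring1
    | (simp; done)
    | (norm_num; done)
  · first
    | (field_simp; ring1)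
    | (field_simp; done)
    | ring1
    | (simp; done)
    | (norm_num; done)
  · first
    | (field_simp; ring1)
    | (field_simp; done)
    | ring1
    | (simp; done)
    | (norm_num; done)
  · set p00 := (γ (x 1) (x 2))⁻¹ 0 0
    set p01 := (γ (x 1) (x 2))⁻¹ 0 1
    set p10 := (γ (x 1) (x 2))⁻¹ 1 0
    set p11 := (γ (x 1) (x 2))⁻¹ 1 1
    set q00 := γ (x 1) (x 2) 0 0
    set q01 := γ (x 1) (x 2) 0 1
    set q10 := γ (x 1) (x 2) 1 0
    set q11 := γ (x 1) (x 2) 1 1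
    linear_combination (norm := (field_simp; ring1))
      (deriv f (x 0) / (2 * f (x 0) * (κ * f (x 0) + 1))
        - deriv f (x 0) / (2 * f (x 0))) * hIG10
  · set p00 := (γ (x 1) (x 2))⁻¹ 0 0
    set p01 := (γ (x 1) (x 2))⁻¹ 0 1
    set p10 := (γ (x 1) (x 2))⁻¹ 1 0
    set p11 := (γ (x 1) (x 2))⁻¹ 1 1
    set q00 := γ (x 1) (x 2) 0 0
    set q01 := γ (x 1) (x 2) 0 1
    set q10 := γ (x 1) (x 2) 1 0
    set q11 := γ (x 1) (x 2) 1 1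
    linear_combination (norm := (field_simp; ring1))
      (deriv f (x 0) / (2 * f (x 0) * (κ * f (x 0) + 1))
        - deriv f (x 0) / (2 * f (x 0))) * hIG11
  · set p00 := (γ (x 1) (x 2))⁻¹ 0 0
    set p01 := (γ (x 1) (x 2))⁻¹ 0 1
    set p10 := (γ (x 1) (x 2))⁻¹ 1 0
    set p11 := (γ (x 1) (x 2))⁻¹ 1 1
    set q00 := γ (x 1) (x 2) 0 0
    set q01 := γ (x 1) (x 2) 0 1
    set q10 := γ (x 1) (x 2) 1 0
    set q11 := γ (x 1) (x 2) 1 1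
    linear_combination (norm := (field_simp; ring1))
      (deriv f (x 0) / (2 * f (x 0) * (κ * f (x 0) + 1))
        - deriv f (x 0) / (2 * f (x 0))) * hIG10
  · first
    | (field_simp; ring1)
    | (field_simp; done)
    | ring1
    | (simp; done)
    | (norm_num; done)
  · first
    | (field_simp; ring1)
    | (field_simp; done)
    | ring1
    | (simp; done)
    | (norm_num; done)
  · set p00 := (γ (x 1) (x 2))⁻¹ 0 0
    set p01 := (γ (x 1) (x 2))⁻¹ 0 1
    set p10 := (γ (x 1) (x 2))⁻¹ 1 0
    set p11 := (γ (x 1) (x 2))⁻¹ 1 1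
    set q00 := γ (x 1) (x 2) 0 0
    set q01 := γ (x 1) (x 2) 0 1
    set q10 := γ (x 1) (x 2) 1 0
    set q11 := γ (x 1) (x 2) 1 1
    linear_combination (norm := (field_simp; ring1))
      (deriv f (x 0) / (2 * f (x 0) * (κ * f (x 0) + 1))
        - deriv f (x 0) / (2 * f (x 0))) * hIG11
  · first
    | (field_simp; ring1)
    | (field_simp; done)
    | ring1
    | (simp; done)
    | (norm_num; done)
  · first
    | (field_simp; ring1)
    | (field_simp; done)
    | ring1
    | (simp; done)
    | (norm_num; done)
end
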